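/- arXiv:1807.02563 — 4 statements merged into one kernel-verified Lean document; each statement's English description precedes it below -/
import Mathlib

section
/- Local invariance of the low-order update: let B ⊆ ℝ^m be a convex set and fix i ∈ V. Assume (a) U_j^n ∈ B for all j ∈ V; (b) Ū_ij ∈ B for all j ≠ i; (c) U_i^n + 2τ S(U_i^n) ∈ B; (d) 1 + 4τ d_ii/m_i ≥ 0. Then U_i^{L,n+1} ∈ B. -/
/-!
Writing `λ_j = 4τ d_ij / m_i`, the scheme rearranges into
`U_i^{L,n+1} = ½ (U_i^n + 2τ S(U_i^n)) + ½ (U_i^n + ∑_{j≠i} λ_j (Ū_ij − U_i^n))`,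
once the flux sum is rewritten with `∑_j c_ij = 0` as `∑_{j≠i} (f(U_j^n) − f(U_i^n)) c_ij`.
The weights `λ_j` are nonnegative with total `−4τ d_ii / m_i ≤ 1` by (d), so the second point is a
convex combination of `U_i^n` and the bar states, and the update is the midpoint of two points of `B`.
-/

open Finset

theorem Convex.add_sum_smul_sub_mem {ι E : Type*} [AddCommGroup E] [Module ℝ E] {B : Set E}
    (hB : Convex ℝ B) {s : Finset ι} {x : E} {y : ι → E} {w : ι → ℝ} (hx : x ∈ B)
    (hy : ∀ j ∈ s, y j ∈ B) (hw : ∀ j ∈ s, 0 ≤ w j) (hw₁ : ∑ j ∈ s, w j ≤ 1) :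
    x + ∑ j ∈ s, w j • (y j - x) ∈ B := by
  rcases (sum_nonneg hw).eq_or_lt with hzero | hpos
  · have hw₀ : ∀ j ∈ s, w j = 0 := (sum_eq_zero_iff_of_nonneg hw).1 hzero.symm
    rw [sum_eq_zero fun j hj => by rw [hw₀ j hj, zero_smul], add_zero]
    exact hx
  · have hcomb : ∑ j ∈ s, w j • (y j - x) = (∑ j ∈ s, w j) • (s.centerMass w y - x) := by
      rw [centerMass, smul_sub, smul_smul, mul_inv_cancel₀ hpos.ne', one_smul, sum_smul,
        ← sum_sub_distrib]
      simp_rw [smul_sub]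
    rw [hcomb]
    exact hB.add_smul_sub_mem hx (hB.centerMass_mem hw hpos hy) ⟨hpos.le, hw₁⟩

theorem Matrix.sum_mulVec_eq_sum_erase_sub_mulVec {V n p R : Type*} [Fintype V] [DecidableEq V]
    [Fintype p] [CommRing R] (A : V → Matrix n p R) {c : V → p → R} (hc : ∑ j, c j = 0)
    (i : V) : ∑ j, (A j).mulVec (c j) = ∑ j ∈ univ.erase i, (A j - A i).mulVec (c j) := by
  have hshift : ∑ j, (A j - A i).mulVec (c j) = ∑ j, (A j).mulVec (c j) := by
    simp only [Matrix.sub_mulVec, sum_sub_distrib, ← Matrix.mulVec_sum, hc, Matrix.mulVec_zero,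
      sub_zero]
  rw [← hshift, ← add_sum_erase _ _ (mem_univ i), sub_self, Matrix.zero_mulVec, zero_add]

/-- `barState u w g d` is `Ū_ij` for `u = U_i`, `w = U_j`, `g = (f(U_j) − f(U_i)) c_ij`,
`d = d_ij`. -/
noncomputable def barState {E : Type*} [AddCommGroup E] [Module ℝ E] (u w g : E) (d : ℝ) : E :=
  (1 / 2 : ℝ) • (u + w) - (1 / (2 * d)) • g

theorem barState_sub_eq {E : Type*} [AddCommGroup E] [Module ℝ E] (u w g : E) {d : ℝ}
    (hd : d ≠ 0) : barState u w g d - u = (1 / (2 * d)) • (d • (w - u) - g) := by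
  unfold barState
  match_scalars
  · field_simp
    ring
  · field_simp
  · ring

theorem eq_midpoint_of_lowOrder_update {ι E : Type*} [AddCommGroup E] [Module ℝ E]
    {s : Finset ι} {M τ : ℝ} {u v S : E} {w g : ι → E} {d : ι → ℝ} (hM : M ≠ 0) (hτ : τ ≠ 0)
    (hd : ∀ j ∈ s, d j ≠ 0)
    (hstep : (M / τ) • (v - u) + ∑ j ∈ s, g j - ∑ j ∈ s, d j • (w j - u) = M • S) :
    v = (1 / 2 : ℝ) • (u + (2 * τ) • S) +
      (1 / 2 : ℝ) • (u + ∑ j ∈ s, (4 * τ * d j / M) • (barState u (w j) (g j) (d j) - u)) := by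
  have hterm : ∀ j ∈ s, (4 * τ * d j / M) • (barState u (w j) (g j) (d j) - u)
      = (2 * τ / M) • (d j • (w j - u) - g j) := by
    intro j hj
    rw [barState_sub_eq _ _ _ (hd j hj), smul_smul]
    congr 1
    field_simp [hd j hj]
    ring
  have hsum : ∑ j ∈ s, d j • (w j - u) - ∑ j ∈ s, g j = (M / τ) • (v - u) - M • S := by
    linear_combination (norm := module) -hstep
  rw [sum_congr rfl hterm, ← smul_sum, sum_sub_distrib, hsum]
  match_scalars <;> field_simp <;> ring

theorem low_order_local_invariance_general
    (m d : ℕ)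
    (V : Type) [Fintype V] [DecidableEq V]
    (M : V → ℝ) (hM : ∀ i, 0 < M i)
    (c : V → V → Fin d → ℝ)
    (hcsum : ∀ i, ∑ j, c i j = 0)
    (f : (Fin m → ℝ) → Matrix (Fin m) (Fin d) ℝ)
    (S : (Fin m → ℝ) → (Fin m → ℝ))
    (dL : V → V → ℝ)
    (hdpos : ∀ i j, i ≠ j → 0 < dL i j)
    (U UL : V → Fin m → ℝ)
    (τ : ℝ) (hτ : 0 < τ)
    (hscheme : ∀ i, (M i / τ) • (UL i - U i) + ∑ j, (f (U j)).mulVec (c i j)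
        - ∑ j ∈ univ.erase i, dL i j • (U j - U i) = M i • S (U i))
    (B : Set (Fin m → ℝ)) (hB : Convex ℝ B)
    (i : V)
    (hU : ∀ j, U j ∈ B)
    (hbar : ∀ j ∈ univ.erase i,
      (1/2 : ℝ) • (U i + U j)
        - (1 / (2 * dL i j)) • ((f (U j) - f (U i)).mulVec (c i j)) ∈ B)
    (hsrc : U i + (2 * τ) • S (U i) ∈ B)
    (hCFL : 0 ≤ 1 + 4 * τ * (-(∑ j ∈ univ.erase i, dL i j)) / M i) :
    UL i ∈ B := by
  have hdij : ∀ j ∈ univ.erase i, 0 < dL i j := fun j hj =>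
    hdpos i j (ne_of_mem_erase hj).symm
  have hstep := hscheme i
  rw [Matrix.sum_mulVec_eq_sum_erase_sub_mulVec (fun j => f (U j)) (hcsum i) i] at hstep
  rw [eq_midpoint_of_lowOrder_update (w := U) (hM i).ne' hτ.ne' (fun j hj => (hdij j hj).ne')
    hstep]
  have hweights_nonneg : ∀ j ∈ univ.erase i, 0 ≤ 4 * τ * dL i j / M i := fun j hj =>
    div_nonneg (mul_pos (mul_pos four_pos hτ) (hdij j hj)).le (hM i).le
  have hweights_le_one : ∑ j ∈ univ.erase i, 4 * τ * dL i j / M i ≤ 1 := by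
    rw [← sum_div, ← mul_sum]
    rw [mul_neg, neg_div] at hCFL
    linarith
  exact hB hsrc (hB.add_sum_smul_sub_mem (hU i) hbar hweights_nonneg hweights_le_one)
    (by norm_num) (by norm_num) (by norm_num)

/-- Local invariance of the low-order update. -/
theorem low_order_local_invariance
    (m d : ℕ) (hm : 1 ≤ m) (hd : 1 ≤ d)
    (V : Type) [Fintype V] [DecidableEq V]
    (M : V → ℝ) (hM : ∀ i, 0 < M i)
    (c : V → V → Fin d → ℝ)
    (hcskew : ∀ i j, c i j = - c j i)
    (hcsum : ∀ i, ∑ j, c i j = 0)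
    (f : (Fin m → ℝ) → Matrix (Fin m) (Fin d) ℝ)
    (S : (Fin m → ℝ) → (Fin m → ℝ))
    (dL : V → V → ℝ)
    (hdsym : ∀ i j, i ≠ j → dL i j = dL j i)
    (hdpos : ∀ i j, i ≠ j → 0 < dL i j)
    (U UL : V → Fin m → ℝ)
    (τ : ℝ) (hτ : 0 < τ)
    (hscheme : ∀ i, (M i / τ) • (UL i - U i) + ∑ j, (f (U j)).mulVec (c i j)
        - ∑ j ∈ univ.erase i, dL i j • (U j - U i) = M i • S (U i))
    (B : Set (Fin m → ℝ)) (hB : Convex ℝ B)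
    (i : V)
    (hU : ∀ j, U j ∈ B)
    (hbar : ∀ j ∈ univ.erase i,
      (1/2 : ℝ) • (U i + U j)
        - (1 / (2 * dL i j)) • ((f (U j) - f (U i)).mulVec (c i j)) ∈ B)
    (hsrc : U i + (2 * τ) • S (U i) ∈ B)
    (hCFL : 0 ≤ 1 + 4 * τ * (-(∑ j ∈ univ.erase i, dL i j)) / M i) :
    UL i ∈ B :=
  low_order_local_invariance_general m d V M hM c hcsum f S dL hdpos U UL τ hτ hscheme B hB i hU
    hbar hsrc hCFL
end

section
/- Computation of the limiter: let C ⊆ ℝ^m be convex; let Ψ_i, Ψ_j : C → ℝ be quasiconcave and continuous; let U_i^L, U_j^L ∈ C with Ψ_i(U_i^L) ≥ 0 and Ψ_j(U_j^L) ≥ 0; let P_ij, P_ji ∈ ℝ^m be such that U_i^L + ℓ P_ij ∈ C and U_j^L + ℓ P_ji ∈ C for all ℓ ∈ [0,1]. Define ℓ^i_j := 1 if Ψ_i(U_i^L + P_ij) ≥ 0, and ℓ^i_j := max{ℓ ∈ [0,1] : Ψ_i(U_i^L + ℓ P_ij) ≥ 0} otherwise; define ℓ^j_i analogously with Ψ_j,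 U_j^L, P_ji. Then: (i) Ψ_i(U_i^L + ℓ P_ij) ≥ 0 for every ℓ ∈ [0, ℓ^i_j]; (ii) setting ℓ_ij := min(ℓ^i_j, ℓ^j_i), one has Ψ_i(U_i^L + ℓ_ij P_ij) ≥ 0, Ψ_j(U_j^L + ℓ_ij P_ji) ≥ 0, and ℓ_ij = ℓ_ji. -/
open Finset Set

/- Quasiconcavity makes the superlevel set `{Ψ ≥ 0}` convex, so its trace on the ray
`l ↦ U + l • P` is an interval of parameters; it contains `0` and the limiter `ℓ`, hence all of
`[0, ℓ]`, and in particular the common value `min ℓ^i_j ℓ^j_i`. -/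

section

variable {E : Type*} [AddCommGroup E] [Module ℝ E]

theorem Convex.add_smul_mem_of_mem_Icc {S : Set E} (hS : Convex ℝ S) {U P : E} {s t : ℝ}
    (hU : U ∈ S) (ht : U + t • P ∈ S) (hs : s ∈ Icc 0 t) : U + s • P ∈ S := by
  have hline : Convex ℝ ((fun l : ℝ => U + l • P) ⁻¹' S) :=
    (hS.translate_preimage_right U).linear_preimage (LinearMap.toSpanSingleton ℝ E P)
  exact hline.ordConnected.out (by simpa using hU) ht hs

def IsLimiter (Ψ : E → ℝ) (U P : E) (l : ℝ) : Prop :=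
  (0 ≤ Ψ (U + P) ∧ l = 1)
    ∨ (¬ 0 ≤ Ψ (U + P) ∧ IsGreatest {l | l ∈ Icc (0:ℝ) 1 ∧ 0 ≤ Ψ (U + l • P)} l)

theorem IsLimiter.mem_Icc_and_nonneg {Ψ : E → ℝ} {U P : E} {l : ℝ} (hl : IsLimiter Ψ U P l) :
    l ∈ Icc (0:ℝ) 1 ∧ 0 ≤ Ψ (U + l • P) := by
  rcases hl with ⟨hΨ, rfl⟩ | ⟨_, hgreatest⟩
  · exact ⟨⟨zero_le_one, le_rfl⟩, by simpa using hΨ⟩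
  · exact hgreatest.1

theorem IsLimiter.forall_mem_Icc_nonneg {C : Set E} {Ψ : E → ℝ}
    (hqc : Convex ℝ {W | W ∈ C ∧ 0 ≤ Ψ W}) {U P : E} (hU : U ∈ C) (hΨU : 0 ≤ Ψ U)
    (hseg : ∀ l ∈ Icc (0:ℝ) 1, U + l • P ∈ C) {ℓ : ℝ} (hℓ : IsLimiter Ψ U P ℓ) :
    ∀ l ∈ Icc 0 ℓ, 0 ≤ Ψ (U + l • P) := by
  intro l hl
  obtain ⟨hℓ_mem, hΨℓ⟩ := hℓ.mem_Icc_and_nonneg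
  exact (hqc.add_smul_mem_of_mem_Icc ⟨hU, hΨU⟩ ⟨hseg ℓ hℓ_mem, hΨℓ⟩ hl).2

end

theorem compute_limiter_general
    (m : ℕ) (C : Set (Fin m → ℝ))
    (Ψi Ψj : (Fin m → ℝ) → ℝ)
    (hΨiqc : ∀ χ : ℝ, Convex ℝ {W | W ∈ C ∧ χ ≤ Ψi W})
    (hΨjqc : ∀ χ : ℝ, Convex ℝ {W | W ∈ C ∧ χ ≤ Ψj W})
    (ULi ULj : Fin m → ℝ) (hULi : ULi ∈ C) (hULj : ULj ∈ C)
    (hΨiL : 0 ≤ Ψi ULi) (hΨjL : 0 ≤ Ψj ULj)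
    (Pij Pji : Fin m → ℝ)
    (hsegi : ∀ l ∈ Icc (0:ℝ) 1, ULi + l • Pij ∈ C)
    (hsegj : ∀ l ∈ Icc (0:ℝ) 1, ULj + l • Pji ∈ C)
    (lij lji : ℝ)
    (hlij : (0 ≤ Ψi (ULi + Pij) ∧ lij = 1)
      ∨ (¬ 0 ≤ Ψi (ULi + Pij)
          ∧ IsGreatest {l | l ∈ Icc (0:ℝ) 1 ∧ 0 ≤ Ψi (ULi + l • Pij)} lij))
    (hlji : (0 ≤ Ψj (ULj + Pji) ∧ lji = 1)
      ∨ (¬ 0 ≤ Ψj (ULj + Pji)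
          ∧ IsGreatest {l | l ∈ Icc (0:ℝ) 1 ∧ 0 ≤ Ψj (ULj + l • Pji)} lji)) :
    (∀ l ∈ Icc (0:ℝ) lij, 0 ≤ Ψi (ULi + l • Pij))
    ∧ (0 ≤ Ψi (ULi + min lij lji • Pij)
        ∧ 0 ≤ Ψj (ULj + min lij lji • Pji)
        ∧ min lij lji = min lji lij) := by
  have hi : IsLimiter Ψi ULi Pij lij := hlij
  have hj : IsLimiter Ψj ULj Pji lji := hlji
  have hmin_nonneg : 0 ≤ min lij lji :=
    le_min hi.mem_Icc_and_nonneg.1.1 hj.mem_Icc_and_nonneg.1.1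
  have below_i := hi.forall_mem_Icc_nonneg (hΨiqc 0) hULi hΨiL hsegi
  have below_j := hj.forall_mem_Icc_nonneg (hΨjqc 0) hULj hΨjL hsegj
  exact ⟨below_i, below_i _ ⟨hmin_nonneg, min_le_left _ _⟩,
    below_j _ ⟨hmin_nonneg, min_le_right _ _⟩, min_comm _ _⟩

/-- Computation of the limiter `ℓ_ij = min(ℓ^i_j, ℓ^j_i)`. -/
theorem compute_limiter
    (m : ℕ) (C : Set (Fin m → ℝ)) (hC : Convex ℝ C)
    (Ψi Ψj : (Fin m → ℝ) → ℝ)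
    (hΨiqc : ∀ χ : ℝ, Convex ℝ {W | W ∈ C ∧ χ ≤ Ψi W})
    (hΨjqc : ∀ χ : ℝ, Convex ℝ {W | W ∈ C ∧ χ ≤ Ψj W})
    (hΨicont : ContinuousOn Ψi C) (hΨjcont : ContinuousOn Ψj C)
    (ULi ULj : Fin m → ℝ) (hULi : ULi ∈ C) (hULj : ULj ∈ C)
    (hΨiL : 0 ≤ Ψi ULi) (hΨjL : 0 ≤ Ψj ULj)
    (Pij Pji : Fin m → ℝ)
    (hsegi : ∀ l ∈ Icc (0:ℝ) 1, ULi + l • Pij ∈ C)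
    (hsegj : ∀ l ∈ Icc (0:ℝ) 1, ULj + l • Pji ∈ C)
    (lij lji : ℝ)
    (hlij : (0 ≤ Ψi (ULi + Pij) ∧ lij = 1)
      ∨ (¬ 0 ≤ Ψi (ULi + Pij)
          ∧ IsGreatest {l | l ∈ Icc (0:ℝ) 1 ∧ 0 ≤ Ψi (ULi + l • Pij)} lij))
    (hlji : (0 ≤ Ψj (ULj + Pji) ∧ lji = 1)
      ∨ (¬ 0 ≤ Ψj (ULj + Pji)
          ∧ IsGreatest {l | l ∈ Icc (0:ℝ) 1 ∧ 0 ≤ Ψj (ULj + l • Pji)} lji)) :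
    (∀ l ∈ Icc (0:ℝ) lij, 0 ≤ Ψi (ULi + l • Pij))
    ∧ (0 ≤ Ψi (ULi + min lij lji • Pij)
        ∧ 0 ≤ Ψj (ULj + min lij lji • Pji)
        ∧ min lij lji = min lji lij) :=
  compute_limiter_general m C Ψi Ψj hΨiqc hΨjqc ULi ULj hULi hULj hΨiL hΨjL Pij Pji hsegi hsegj lij
    lji hlij hlji
end

section
/- From quasiconcave to concave constraints: let B ⊆ ℝ^m be convex, Ψ : B → ℝ, R : B → ℝ with R(U) > 0 for all U ∈ B, and assume Φ := R·Ψ is concave on B. Let U^L ∈ B with Ψ(U^L) ≥ 0, let P ∈ ℝ^m and ℓ^max ∈ [0,1] be such that U^L + ℓP ∈ B for all ℓ ∈ [0, ℓ^max], and let Ψ^min ∈ ℝ. Assume either (i) R is the restriction to B of an affine function on ℝ^m, or (ii) Ψ^min ≥ 0 and R is convex on B. Then: (1) for every ℓ ∈ [0, ℓ^max], Ψ(U^L + ℓP) − Ψ^min ≥ 0 if and only if Φ(U^L + ℓP) − Ψ^min R(U^L + ℓP) ≥ 0; and (2) the map ℓ ↦ Φ(U^L + ℓP) − Ψ^min R(U^L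 + ℓP) is concave on [0, ℓ^max]. -/
/-! Since `R > 0`, `Φ - Ψmin R = R (Ψ - Ψmin)` has the sign of `Ψ - Ψmin`. On `B` it is concave
minus convex, because `Ψmin R` is affine in case (i) and a nonnegative multiple of a convex
function in case (ii); restricting a concave function to a line keeps it concave. -/

open Set

section

variable {𝕜 E β : Type*} [Field 𝕜] [LinearOrder 𝕜]
  [AddCommGroup E] [Module 𝕜 E]

theorem AffineMap.convexOn [AddCommGroup β] [PartialOrder β] [Module 𝕜 β]
    (f : E →ᵃ[𝕜] β) {s : Set E} (hs : Convex 𝕜 s) : ConvexOn 𝕜 s f :=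
  ⟨hs, fun _ _ _ _ _ _ _ _ hab => (Convex.combo_affine_apply hab).le⟩

theorem ConcaveOn.comp_add_smul [AddCommMonoid β] [PartialOrder β] [SMul 𝕜 β]
    {s : Set E} {f : E → β} (hf : ConcaveOn 𝕜 s f) {I : Set 𝕜} (hI : Convex 𝕜 I)
    {x v : E} (h : ∀ t ∈ I, x + t • v ∈ s) : ConcaveOn 𝕜 I fun t => f (x + t • v) := by
  have hline : ∀ t : 𝕜, AffineMap.lineMap x (x + v) t = x + t • v := fun t => by
    rw [AffineMap.lineMap_apply, vadd_eq_add, vsub_eq_sub, add_sub_cancel_left, add_comm]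
  have := (hf.comp_affineMap (AffineMap.lineMap x (x + v))).subset
    (fun t ht => by simpa only [mem_preimage, hline] using h t ht) hI
  simpa only [Function.comp_def, hline] using this

end

theorem quasiconcave_to_concave_constraint_general
    (m : ℕ) (B : Set (Fin m → ℝ))
    (Ψ R : (Fin m → ℝ) → ℝ)
    (hRpos : ∀ U ∈ B, 0 < R U)
    (hconc : ConcaveOn ℝ B (fun U => R U * Ψ U))
    (UL : Fin m → ℝ)
    (P : Fin m → ℝ)
    (lmax : ℝ)
    (hseg : ∀ l ∈ Icc (0:ℝ) lmax, UL + l • P ∈ B)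
    (Ψmin : ℝ)
    (hcase : (∃ A : (Fin m → ℝ) →ᵃ[ℝ] ℝ, ∀ U ∈ B, R U = A U)
      ∨ (0 ≤ Ψmin ∧ ConvexOn ℝ B R)) :
    (∀ l ∈ Icc (0:ℝ) lmax,
        (0 ≤ Ψ (UL + l • P) - Ψmin ↔
          0 ≤ R (UL + l • P) * Ψ (UL + l • P) - Ψmin * R (UL + l • P)))
    ∧ ConcaveOn ℝ (Icc (0:ℝ) lmax)
        (fun l : ℝ => R (UL + l • P) * Ψ (UL + l • P) - Ψmin * R (UL + l • P)) := by
  have hR : ConvexOn ℝ B fun U => Ψmin * R U := by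
    rcases hcase with ⟨A, hA⟩ | ⟨hΨmin, hRconv⟩
    · exact ((Ψmin • A).convexOn hconc.1).congr fun U hU => by simp [hA U hU]
    · exact hRconv.smul hΨmin
  refine ⟨fun l hl => ?_, (hconc.sub hR).comp_add_smul (convex_Icc 0 lmax) hseg⟩
  rw [mul_comm Ψmin, ← mul_sub]
  exact (mul_nonneg_iff_of_pos_left (hRpos _ (hseg l hl))).symm

/-- transforming a quasiconcave constraint into a concave constraint:
with `Φ := R·Ψ` concave and `R > 0` on the convex set `B`, the constraint
`Ψ − Ψ^min ≥ 0` is equivalent along the segment to `Φ − Ψ^min R ≥ 0`, and the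
latter is concave in the line-search parameter. -/
theorem quasiconcave_to_concave_constraint
    (m : ℕ) (B : Set (Fin m → ℝ)) (hB : Convex ℝ B)
    (Ψ R : (Fin m → ℝ) → ℝ)
    (hRpos : ∀ U ∈ B, 0 < R U)
    (hconc : ConcaveOn ℝ B (fun U => R U * Ψ U))
    (UL : Fin m → ℝ) (hUL : UL ∈ B) (hΨUL : 0 ≤ Ψ UL)
    (P : Fin m → ℝ)
    (lmax : ℝ) (hlmax : lmax ∈ Icc (0:ℝ) 1)
    (hseg : ∀ l ∈ Icc (0:ℝ) lmax, UL + l • P ∈ B)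
    (Ψmin : ℝ)
    (hcase : (∃ A : (Fin m → ℝ) →ᵃ[ℝ] ℝ, ∀ U ∈ B, R U = A U)
      ∨ (0 ≤ Ψmin ∧ ConvexOn ℝ B R)) :
    (∀ l ∈ Icc (0:ℝ) lmax,
        (0 ≤ Ψ (UL + l • P) - Ψmin ↔
          0 ≤ R (UL + l • P) * Ψ (UL + l • P) - Ψmin * R (UL + l • P)))
    ∧ ConcaveOn ℝ (Icc (0:ℝ) lmax)
        (fun l : ℝ => R (UL + l • P) * Ψ (UL + l • P) - Ψmin * R (UL + l • P)) :=
  quasiconcave_to_concave_constraint_general m B Ψ R hRpos hconc UL P lmax hseg Ψmin hcase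
end

section
/- Newton–secant ordering: let ℓ_l < ℓ_r be reals and let g : [ℓ_l, ℓ_r] → ℝ be twice continuously differentiable with g''(ℓ) < 0 for all ℓ ∈ [ℓ_l, ℓ_r], g(ℓ_l) > 0 and g(ℓ_r) < 0. Then: (i) the secant slope s_l := (g(ℓ_r) − g(ℓ_l))/(ℓ_r − ℓ_l) and the derivative s_r := g'(ℓ_r) are both negative; (ii) there is a unique ℓ* ∈ (ℓ_l, ℓ_r) with g(ℓ*) = 0, and the updates ℓ_l' := ℓ_l − g(ℓ_l)/s_l and ℓ_r' := ℓ_r − g(ℓ_r)/s_r satisfy ℓ_l < ℓ_l' < ℓ* < ℓ_r' < ℓ_r. -/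
/-!
Since `g'' < 0`, `g` is strictly concave on `[ℓ_l, ℓ_r]`. A concave function that has dropped from
`g(ℓ_l) > 0` to `0` at `ℓ*` is negative beyond `ℓ*`, which gives uniqueness of the root and places
every point where `g ≥ 0` to the left of `ℓ*`. Strict concavity puts the graph strictly above the
secant through the endpoints and strictly below the tangent at `ℓ_r`: hence `g > 0` at the zero
`ℓ_l'` of the secant, so `ℓ_l' < ℓ*`, while the tangent is positive at `ℓ*`, so its zero `ℓ_r'` lies
to the right of `ℓ*`.
-/

open Set

theorem strictConcaveOn_of_hasDerivWithinAt2_neg {D : Set ℝ} (hD : Convex ℝ D) {f f' f'' : ℝ → ℝ}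
    (hf' : ∀ x ∈ D, HasDerivWithinAt f (f' x) D x) (hf'' : ∀ x ∈ D, HasDerivWithinAt f' (f'' x) D x)
    (hf''₀ : ∀ x ∈ D, f'' x < 0) : StrictConcaveOn ℝ D f := by
  have hanti : StrictAntiOn f' D :=
    strictAntiOn_of_hasDerivWithinAt_neg hD (fun x hx ↦ (hf'' x hx).continuousWithinAt)
      (fun x hx ↦ (hf'' x (interior_subset hx)).mono interior_subset)
      (fun x hx ↦ hf''₀ x (interior_subset hx))
  have hderiv : (interior D).EqOn f' (deriv f) := (deriv_eqOn isOpen_interior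
    fun x hx ↦ (hf' x (interior_subset hx)).mono interior_subset).symm
  exact ((hanti.mono interior_subset).congr hderiv).strictConcaveOn_of_deriv hD
    fun x hx ↦ (hf' x hx).continuousWithinAt

section LinearOrderedField

variable {𝕜 : Type*} [Field 𝕜] [LinearOrder 𝕜] [IsStrictOrderedRing 𝕜] {s : Set 𝕜} {f : 𝕜 → 𝕜}
  {a b c x : 𝕜}

theorem ConcaveOn.le_of_lt_of_apply_lt_of_apply_le (hf : ConcaveOn 𝕜 s f) (ha : a ∈ s)
    (hx : x ∈ s) (hac : a < c) (hfac : f c < f a) (hfcx : f c ≤ f x) : x ≤ c := by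
  by_contra! hcx
  have hslope := hf.slope_anti_adjacent ha hx hac hcx
  have hleft : (f c - f a) / (c - a) < 0 := div_neg_of_neg_of_pos (by linarith) (by linarith)
  have hright : 0 ≤ (f x - f c) / (x - c) := div_nonneg (by linarith) (by linarith)
  linarith

theorem secant_root_mem_Ioo {u v : 𝕜} (hab : a < b) (hu : 0 < u) (hv : v < 0) :
    a - u / ((v - u) / (b - a)) ∈ Ioo a b := by
  have hvu : v - u < 0 := by linarith
  rw [div_div_eq_mul_div, mem_Ioo, lt_sub_comm, sub_lt_comm, sub_self, div_neg_iff,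
    lt_div_iff_of_neg hvu]
  constructor
  · exact .inl ⟨mul_pos hu (sub_pos.2 hab), hvu⟩
  · nlinarith

theorem StrictConcaveOn.apply_secant_root_pos (hf : StrictConcaveOn 𝕜 s f) (ha : a ∈ s)
    (hb : b ∈ s) (hab : a < b) (hfa : 0 < f a) (hfb : f b < 0) :
    0 < f (a - f a / ((f b - f a) / (b - a))) := by
  set σ := (f b - f a) / (b - a)
  set x := a - f a / σ
  obtain ⟨hax, hxb⟩ : x ∈ Ioo a b := secant_root_mem_Ioo hab hfa hfb
  have hσ : σ < 0 := div_neg_of_neg_of_pos (by linarith) (sub_pos.2 hab)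
  have hx : x ∈ s := hf.1.ordConnected.out ha hb ⟨hax.le, hxb.le⟩
  have hσx : σ < (f x - f a) / (x - a) := hf.secant_strict_mono ha hx hb hax.ne' hab.ne' hxb
  have hxa : x - a = -f a / σ := by simp only [x]; ring
  rw [lt_div_iff₀ (sub_pos.2 hax), hxa, mul_div_cancel₀ _ hσ.ne] at hσx
  linarith

end LinearOrderedField

theorem StrictConcaveOn.newton_root_mem_Ioo {S : Set ℝ} {f : ℝ → ℝ} {f' b c : ℝ}
    (hf : StrictConcaveOn ℝ S f) (hc : c ∈ S) (hb : b ∈ S) (hcb : c < b)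
    (hf' : HasDerivWithinAt f f' S b) (hfc : f c = 0) (hfb : f b < 0) :
    b - f b / f' ∈ Ioo c b := by
  have hslope : f' < f b / (b - c) := by
    simpa [slope_def_field, hfc] using hf.lt_slope_of_hasDerivWithinAt hc hb hcb hf'
  have hf'neg : f' < 0 := hslope.trans (div_neg_of_neg_of_pos hfb (sub_pos.2 hcb))
  rw [lt_div_iff₀ (sub_pos.2 hcb)] at hslope
  rw [mem_Ioo, lt_sub_comm, sub_lt_self_iff, div_lt_iff_of_neg hf'neg]
  exact ⟨by linarith, div_pos_of_neg_of_neg hfb hf'neg⟩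

theorem newton_secant_ordering_general
    (ll lr : ℝ) (hllr : ll < lr)
    (g g' g'' : ℝ → ℝ)
    (hg' : ∀ x ∈ Icc ll lr, HasDerivWithinAt g (g' x) (Icc ll lr) x)
    (hg'' : ∀ x ∈ Icc ll lr, HasDerivWithinAt g' (g'' x) (Icc ll lr) x)
    (hconc : ∀ x ∈ Icc ll lr, g'' x < 0)
    (hgl : 0 < g ll) (hgr : g lr < 0) :
    (g lr - g ll) / (lr - ll) < 0 ∧ g' lr < 0 ∧
    ∃ lstar ∈ Ioo ll lr, g lstar = 0
      ∧ (∀ y ∈ Ioo ll lr, g y = 0 → y = lstar)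
      ∧ ll < ll - g ll / ((g lr - g ll) / (lr - ll))
      ∧ ll - g ll / ((g lr - g ll) / (lr - ll)) < lstar
      ∧ lstar < lr - g lr / g' lr
      ∧ lr - g lr / g' lr < lr := by
  have hll : ll ∈ Icc ll lr := left_mem_Icc.2 hllr.le
  have hlr : lr ∈ Icc ll lr := right_mem_Icc.2 hllr.le
  have hconcave : StrictConcaveOn ℝ (Icc ll lr) g :=
    strictConcaveOn_of_hasDerivWithinAt2_neg (convex_Icc ll lr) hg' hg'' hconc
  have hsecant : (g lr - g ll) / (lr - ll) < 0 :=
    div_neg_of_neg_of_pos (by linarith) (sub_pos.2 hllr)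
  have hderiv : g' lr < 0 := by
    have := hconcave.lt_slope_of_hasDerivWithinAt hll hlr hllr (hg' lr hlr)
    rw [slope_def_field] at this
    exact this.trans hsecant
  obtain ⟨lstar, hlstar, hroot⟩ := intermediate_value_Icc' hllr.le
    (fun x hx ↦ (hg' x hx).continuousWithinAt) ⟨hgr.le, hgl.le⟩
  have hlstar_gt : ll < lstar := hlstar.1.lt_of_ne (by rintro rfl; linarith)
  have hlstar_lt : lstar < lr := hlstar.2.lt_of_ne (by rintro rfl; linarith)
  have hle_root : ∀ x ∈ Icc ll lr, 0 ≤ g x → x ≤ lstar := fun x hx hgx ↦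
    hconcave.concaveOn.le_of_lt_of_apply_lt_of_apply_le hll hx hlstar_gt (hroot ▸ hgl)
      (hroot ▸ hgx)
  obtain ⟨hsec_gt, hsec_lt⟩ := secant_root_mem_Ioo hllr hgl hgr
  have hsec_pos := hconcave.apply_secant_root_pos hll hlr hllr hgl hgr
  obtain ⟨hnewton_gt, hnewton_lt⟩ :=
    hconcave.newton_root_mem_Ioo hlstar hlr hlstar_lt (hg' lr hlr) hroot hgr
  refine ⟨hsecant, hderiv, lstar, ⟨hlstar_gt, hlstar_lt⟩, hroot, fun y hy hgy ↦ ?_, hsec_gt,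
    ?_, hnewton_gt, hnewton_lt⟩
  · exact (hle_root y (Ioo_subset_Icc_self hy) hgy.ge).antisymm
      (hconcave.concaveOn.le_of_lt_of_apply_lt_of_apply_le hll hlstar hy.1
        (hgy ▸ hgl) (hgy ▸ hroot.ge))
  · exact (hle_root _ ⟨hsec_gt.le, hsec_lt.le⟩ hsec_pos.le).lt_of_ne
      (fun h ↦ (h ▸ hsec_pos).ne' hroot)

/-- One iteration of the Newton–secant method: under strict
concavity (`g'' < 0`) with `g(ℓ_l) > 0 > g(ℓ_r)`, the secant slope and `g'(ℓ_r)`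
are negative, there is a unique root `ℓ* ∈ (ℓ_l, ℓ_r)`, and the secant update from
the left and Newton update from the right bracket it strictly:
`ℓ_l < ℓ_l' < ℓ* < ℓ_r' < ℓ_r`. -/
theorem newton_secant_ordering
    (ll lr : ℝ) (hllr : ll < lr)
    (g g' g'' : ℝ → ℝ)
    (hg' : ∀ x ∈ Icc ll lr, HasDerivWithinAt g (g' x) (Icc ll lr) x)
    (hg'' : ∀ x ∈ Icc ll lr, HasDerivWithinAt g' (g'' x) (Icc ll lr) x)
    (hg''cont : ContinuousOn g'' (Icc ll lr))
    (hconc : ∀ x ∈ Icc ll lr, g'' x < 0)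
    (hgl : 0 < g ll) (hgr : g lr < 0) :
    (g lr - g ll) / (lr - ll) < 0 ∧ g' lr < 0 ∧
    ∃ lstar ∈ Ioo ll lr, g lstar = 0
      ∧ (∀ y ∈ Ioo ll lr, g y = 0 → y = lstar)
      ∧ ll < ll - g ll / ((g lr - g ll) / (lr - ll))
      ∧ ll - g ll / ((g lr - g ll) / (lr - ll)) < lstar
      ∧ lstar < lr - g lr / g' lr
      ∧ lr - g lr / g' lr < lr :=
  newton_secant_ordering_general ll lr hllr g g' g'' hg' hg'' hconc hgl hgr
end
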